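/- (Compensation identity for Jensen–Shannon divergence.) Let μ, ν, ρ be probability measures on a measurable space X with μ ≪ ρ, ν ≪ ρ, klDiv(μ‖ρ) < ⊤ and klDiv(ν‖ρ) < ⊤. Set M := (1/2)•μ + (1/2)•ν. Then klDiv(M‖ρ) < ⊤, JSD(μ,ν) < ⊤, and (1/2)·(klDiv(μ‖ρ)).toReal + (1/2)·(klDiv(ν‖ρ)).toReal = (JSD(μ,ν)).toReal + (klDiv(M‖ρ)).toReal. (This is the identity of Eq. (S4) in the paper's proof of Lemma 1, with ρ = p_{M_{θ₀}}: JSD(p_{g_θ}‖p_data) = ½KL(p_{g_θ}‖p_{M_{θ₀}}) + ½KL(p_data‖p_{M_{θ₀}}) − KL(p_{M_θ}‖p_{M_{θ₀}}).) -/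
import Mathlib


open MeasureTheory Real
open scoped ENNReal NNReal

open scoped Classical in
/-- Kullback-Leibler divergence of measures (Mathlib's definition). -/
noncomputable def klDiv {X : Type*} [MeasurableSpace X] (μ ν : Measure X) : ℝ≥0∞ :=
  if μ ≪ ν ∧ Integrable (llr μ ν) μ then ENNReal.ofReal (∫ x, llr μ ν x ∂μ) else ⊤

/-- Jensen-Shannon divergence of measures. -/
noncomputable def JSD {X : Type*} [MeasurableSpace X] (μ ν : Measure X) : ℝ≥0∞ :=
  (1 / 2) * klDiv μ ((1 / 2 : ℝ≥0∞) • μ + (1 / 2 : ℝ≥0∞) • ν) +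
    (1 / 2) * klDiv ν ((1 / 2 : ℝ≥0∞) • μ + (1 / 2 : ℝ≥0∞) • ν)

section Aux

variable {X : Type*} [MeasurableSpace X] {μ ν ρ M : Measure X}

/-- log t ≤ t for nonnegative t. -/
lemma aux_log_le {t : ℝ} (ht : 0 ≤ t) : Real.log t ≤ t := by
  rcases eq_or_lt_of_le ht with h | h
  · simp [← h]
  · linarith [Real.log_le_sub_one_of_pos h]

/-- Nonnegativity of the KL integral for probability measures. -/
lemma aux_integral_llr_nonneg [IsProbabilityMeasure μ] [IsProbabilityMeasure ν]
    (hμν : μ ≪ ν) (h : Integrable (llr μ ν) μ) : 0 ≤ ∫ x, llr μ ν x ∂μ := by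
  have hexp : (fun x ↦ Real.exp (- llr μ ν x)) =ᵐ[μ] fun x ↦ (ν.rnDeriv μ x).toReal :=
    exp_neg_llr hμν
  have hint : Integrable (fun x ↦ Real.exp (- llr μ ν x)) μ :=
    Measure.integrable_toReal_rnDeriv.congr hexp.symm
  have hJ : Real.exp (∫ x, - llr μ ν x ∂μ) ≤ ∫ x, Real.exp (- llr μ ν x) ∂μ :=
    convexOn_exp.map_integral_le continuous_exp.continuousOn isClosed_univ
      (Filter.Eventually.of_forall fun _ ↦ trivial) h.neg hint
  have hle : ∫ x, Real.exp (- llr μ ν x) ∂μ ≤ 1 := by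
    rw [integral_congr_ae hexp]
    calc ∫ x, (ν.rnDeriv μ x).toReal ∂μ
        ≤ (ν Set.univ).toReal := by
          rw [← setIntegral_univ]
          exact Measure.setIntegral_toReal_rnDeriv_le (measure_ne_top ν _)
      _ = 1 := by simp
  have : Real.exp (∫ x, - llr μ ν x ∂μ) ≤ Real.exp 0 := by
    simpa using hJ.trans hle
  have h0 : ∫ x, - llr μ ν x ∂μ ≤ 0 := Real.exp_le_exp.mp this
  rw [integral_neg] at h0
  linarith

/-- Chain rule for log-likelihood ratios. -/
lemma aux_llr_chain [SigmaFinite μ] [SigmaFinite M] [SigmaFinite ρ]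
    (hμM : μ ≪ M) (hMρ : M ≪ ρ) :
    llr μ ρ =ᵐ[μ] fun x ↦ llr μ M x + llr M ρ x := by
  have h1 : μ.rnDeriv M * M.rnDeriv ρ =ᵐ[μ] μ.rnDeriv ρ :=
    hμM.ae_le (Measure.rnDeriv_mul_rnDeriv' hMρ)
  have hp1 : ∀ᵐ x ∂μ, 0 < μ.rnDeriv M x := Measure.rnDeriv_pos hμM
  have hp2 : ∀ᵐ x ∂μ, 0 < M.rnDeriv ρ x := hμM.ae_le (Measure.rnDeriv_pos hMρ)
  have hl1 : ∀ᵐ x ∂μ, μ.rnDeriv M x < ∞ := hμM.ae_le (Measure.rnDeriv_lt_top μ M)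
  have hl2 : ∀ᵐ x ∂μ, M.rnDeriv ρ x < ∞ :=
    (hμM.trans hMρ).ae_le (Measure.rnDeriv_lt_top M ρ)
  filter_upwards [h1, hp1, hp2, hl1, hl2] with x hx hx1 hx2 hx3 hx4
  have ha : ((μ.rnDeriv M x).toReal : ℝ) ≠ 0 := (ENNReal.toReal_pos hx1.ne' hx3.ne).ne'
  have hb : ((M.rnDeriv ρ x).toReal : ℝ) ≠ 0 := (ENNReal.toReal_pos hx2.ne' hx4.ne).ne'
  simp only [llr_def]
  rw [← hx, Pi.mul_apply, ENNReal.toReal_mul, Real.log_mul ha hb]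

/-- Key decomposition: integrability and integral identity for one component. -/
lemma aux_key [IsProbabilityMeasure μ] [IsProbabilityMeasure ν] [IsProbabilityMeasure ρ]
    [IsProbabilityMeasure M]
    (hμM : μ ≪ M) (hMρ : M ≪ ρ)
    (hint : Integrable (llr μ ρ) μ)
    (hM : M = (1 / 2 : ℝ≥0∞) • μ + (1 / 2 : ℝ≥0∞) • ν) :
    Integrable (llr μ M) μ ∧ Integrable (llr M ρ) μ ∧
      ∫ x, llr μ ρ x ∂μ = ∫ x, llr μ M x ∂μ + ∫ x, llr M ρ x ∂μ := by
  -- upper bound: dμ/dM ≤ 2 a.e.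
  have hsum : (2 : ℝ≥0∞) • M = μ + ν := by
    have h2 : (2 : ℝ≥0∞) * (1 / 2) = 1 := by
      rw [one_div, ENNReal.mul_inv_cancel two_ne_zero ENNReal.ofNat_ne_top]
    rw [hM, smul_add, smul_smul, smul_smul, h2, one_smul, one_smul]
  have h2M : ∀ᵐ x ∂M, μ.rnDeriv M x ≤ 2 := by
    have hadd : (μ + ν).rnDeriv M =ᵐ[M] μ.rnDeriv M + ν.rnDeriv M :=
      Measure.rnDeriv_add μ ν M
    have hsmul : ((2 : ℝ≥0∞) • M).rnDeriv M =ᵐ[M] fun _ ↦ (2 : ℝ≥0∞) := by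
      have h1 := Measure.rnDeriv_smul_left_of_ne_top M M (r := 2) (by norm_num)
      have h2 := Measure.rnDeriv_self M
      filter_upwards [h1, h2] with x hx1 hx2
      rw [hx1, Pi.smul_apply, hx2, smul_eq_mul, mul_one]
    rw [hsum] at hsmul
    filter_upwards [hadd, hsmul] with x hx1 hx2
    calc μ.rnDeriv M x ≤ μ.rnDeriv M x + ν.rnDeriv M x := le_self_add
      _ = (μ + ν).rnDeriv M x := hx1.symm
      _ = 2 := hx2
  have hub : ∀ᵐ x ∂μ, llr μ M x ≤ Real.log 2 := by
    filter_upwards [hμM.ae_le h2M] with x hx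
    have hx' : (μ.rnDeriv M x).toReal ≤ 2 := by
      calc (μ.rnDeriv M x).toReal ≤ ((2 : ℝ≥0∞)).toReal := ENNReal.toReal_mono (by norm_num) hx
        _ = 2 := by norm_num
    simp only [llr_def]
    rcases eq_or_lt_of_le (ENNReal.toReal_nonneg (a := μ.rnDeriv M x)) with h | h
    · rw [← h, Real.log_zero]
      exact Real.log_nonneg (by norm_num)
    · exact Real.log_le_log h hx'
  have hlb : ∀ᵐ x ∂μ, - llr μ M x ≤ (M.rnDeriv μ x).toReal := by
    filter_upwards [neg_llr hμM] with x hx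
    rw [Pi.neg_apply] at hx
    rw [hx, llr_def]
    exact aux_log_le ENNReal.toReal_nonneg
  have hIntμM : Integrable (llr μ M) μ := by
    refine Integrable.mono' (g := fun x ↦ (M.rnDeriv μ x).toReal + Real.log 2)
      (Measure.integrable_toReal_rnDeriv.add (integrable_const _))
      (measurable_llr _ _).aestronglyMeasurable ?_
    filter_upwards [hub, hlb] with x h1 h2
    rw [Real.norm_eq_abs, abs_le]
    have hnn : (0:ℝ) ≤ (M.rnDeriv μ x).toReal := ENNReal.toReal_nonneg
    have hl2 : (0:ℝ) ≤ Real.log 2 := Real.log_nonneg (by norm_num)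
    constructor <;> linarith
  have hchain : llr μ ρ =ᵐ[μ] fun x ↦ llr μ M x + llr M ρ x := aux_llr_chain hμM hMρ
  have hgμ : Integrable (llr M ρ) μ := by
    have heq : llr M ρ =ᵐ[μ] fun x ↦ llr μ ρ x - llr μ M x := by
      filter_upwards [hchain] with x hx
      rw [hx]; ring
    exact (hint.sub hIntμM).congr heq.symm
  refine ⟨hIntμM, hgμ, ?_⟩
  rw [← integral_add hIntμM hgμ]
  exact integral_congr_ae hchain

end Aux

/-- Compensation identity for the Jensen-Shannon divergence:
`½·KL(μ‖ρ) + ½·KL(ν‖ρ) = JSD(μ,ν) + KL(M‖ρ)` where `M = ½μ + ½ν`. -/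
theorem compensation_identity_jsd
    {X : Type*} [MeasurableSpace X] (μ ν ρ : Measure X)
    [IsProbabilityMeasure μ] [IsProbabilityMeasure ν] [IsProbabilityMeasure ρ]
    (hμac : μ ≪ ρ) (hνac : ν ≪ ρ)
    (hμkl : klDiv μ ρ < ⊤) (hνkl : klDiv ν ρ < ⊤)
    (M : Measure X) (hM : M = (1 / 2 : ℝ≥0∞) • μ + (1 / 2 : ℝ≥0∞) • ν) :
    klDiv M ρ < ⊤ ∧ JSD μ ν < ⊤ ∧
    (1 / 2) * (klDiv μ ρ).toReal + (1 / 2) * (klDiv ν ρ).toReal =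
      (JSD μ ν).toReal + (klDiv M ρ).toReal := by
  classical
  haveI hMprob : IsProbabilityMeasure M := by
    constructor
    rw [hM]
    simp only [Measure.coe_add, Pi.add_apply, Measure.smul_apply, smul_eq_mul, measure_univ,
      mul_one]
    exact ENNReal.add_halves 1
  have hM' : M = (1 / 2 : ℝ≥0∞) • ν + (1 / 2 : ℝ≥0∞) • μ := by rw [hM, add_comm]
  have hμM : μ ≪ M := by
    rw [hM]
    exact (Measure.absolutelyContinuous_smul (by norm_num : (1/2 : ℝ≥0∞) ≠ 0)).trans
      (Measure.AbsolutelyContinuous.rfl.add_right _)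
  have hνM : ν ≪ M := by
    rw [hM']
    exact (Measure.absolutelyContinuous_smul (by norm_num : (1/2 : ℝ≥0∞) ≠ 0)).trans
      (Measure.AbsolutelyContinuous.rfl.add_right _)
  have hMρ : M ≪ ρ := by
    rw [hM]
    exact Measure.AbsolutelyContinuous.add_left (hμac.smul_left _) (hνac.smul_left _)
  have hμint : Integrable (llr μ ρ) μ := by
    by_contra h
    rw [klDiv, if_neg (fun hc => h hc.2)] at hμkl
    exact lt_irrefl _ hμkl
  have hνint : Integrable (llr ν ρ) ν := by
    by_contra h
    rw [klDiv, if_neg (fun hc => h hc.2)] at hνkl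
    exact lt_irrefl _ hνkl
  obtain ⟨hIμM, hIgμ, hAμ⟩ := aux_key hμM hMρ hμint hM
  obtain ⟨hIνM, hIgν, hAν⟩ := aux_key hνM hMρ hνint hM'
  -- integrability of llr M ρ w.r.t. M and its integral
  have hkey : ∀ f : X → ℝ, Integrable f μ → Integrable f ν →
      Integrable f M ∧ ∫ x, f x ∂M = (1/2 : ℝ) * ∫ x, f x ∂μ + (1/2 : ℝ) * ∫ x, f x ∂ν := by
    intro f h1 h2
    have h1' : Integrable f ((1/2 : ℝ≥0∞) • μ) :=
      (integrable_smul_measure (by norm_num) (by norm_num)).mpr h1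
    have h2' : Integrable f ((1/2 : ℝ≥0∞) • ν) :=
      (integrable_smul_measure (by norm_num) (by norm_num)).mpr h2
    constructor
    · rw [hM]; exact h1'.add_measure h2'
    · rw [hM, integral_add_measure h1' h2', integral_smul_measure, integral_smul_measure]
      have h12 : ((1/2 : ℝ≥0∞)).toReal = (1/2 : ℝ) := by
        rw [ENNReal.toReal_div]; norm_num
      rw [h12, smul_eq_mul, smul_eq_mul]
  obtain ⟨hIgM, hCM⟩ := hkey _ hIgμ hIgν
  -- klDiv values
  have eμ : klDiv μ ρ = ENNReal.ofReal (∫ x, llr μ ρ x ∂μ) := by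
    rw [klDiv, if_pos ⟨hμac, hμint⟩]
  have eν : klDiv ν ρ = ENNReal.ofReal (∫ x, llr ν ρ x ∂ν) := by
    rw [klDiv, if_pos ⟨hνac, hνint⟩]
  have eM : klDiv M ρ = ENNReal.ofReal (∫ x, llr M ρ x ∂M) := by
    rw [klDiv, if_pos ⟨hMρ, hIgM⟩]
  have eμM : klDiv μ M = ENNReal.ofReal (∫ x, llr μ M x ∂μ) := by
    rw [klDiv, if_pos ⟨hμM, hIμM⟩]
  have eνM : klDiv ν M = ENNReal.ofReal (∫ x, llr ν M x ∂ν) := by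
    rw [klDiv, if_pos ⟨hνM, hIνM⟩]
  -- nonnegativity
  have nμ : 0 ≤ ∫ x, llr μ ρ x ∂μ := aux_integral_llr_nonneg hμac hμint
  have nν : 0 ≤ ∫ x, llr ν ρ x ∂ν := aux_integral_llr_nonneg hνac hνint
  have nM : 0 ≤ ∫ x, llr M ρ x ∂M := aux_integral_llr_nonneg hMρ hIgM
  have nμM : 0 ≤ ∫ x, llr μ M x ∂μ := aux_integral_llr_nonneg hμM hIμM
  have nνM : 0 ≤ ∫ x, llr ν M x ∂ν := aux_integral_llr_nonneg hνM hIνM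
  have hJSD : JSD μ ν = (1/2 : ℝ≥0∞) * klDiv μ M + (1/2 : ℝ≥0∞) * klDiv ν M := by
    rw [JSD, ← hM]
  refine ⟨by rw [eM]; exact ENNReal.ofReal_lt_top, ?_, ?_⟩
  · rw [hJSD, eμM, eνM]
    exact ENNReal.add_lt_top.mpr ⟨ENNReal.mul_lt_top (by norm_num) ENNReal.ofReal_lt_top,
      ENNReal.mul_lt_top (by norm_num) ENNReal.ofReal_lt_top⟩
  · rw [hJSD, eμM, eνM, eμ, eν, eM]
    rw [ENNReal.toReal_add (ENNReal.mul_lt_top (by norm_num) ENNReal.ofReal_lt_top).ne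
      (ENNReal.mul_lt_top (by norm_num) ENNReal.ofReal_lt_top).ne,
      ENNReal.toReal_mul, ENNReal.toReal_mul, ENNReal.toReal_ofReal nμ,
      ENNReal.toReal_ofReal nν, ENNReal.toReal_ofReal nM, ENNReal.toReal_ofReal nμM,
      ENNReal.toReal_ofReal nνM]
    have h12 : ((1/2 : ℝ≥0∞)).toReal = (1/2 : ℝ) := by
      rw [ENNReal.toReal_div]; norm_num
    rw [h12]
    rw [hAμ, hAν, hCM]
    ring
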